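/- arXiv:1904.12209 — 4 statements merged into one kernel-verified Lean document; each statement's English description precedes it below -/
import Mathlib

section
/- Let Γ ⊂ ℤ² be a finite nonempty convex domain. Every integer-valued harmonic function H on Γ extends uniquely to an integer-valued harmonic function on the diamond hull of Γ: there exists exactly one φ : diam(Γ) → ℤ harmonic on diam(Γ) with φ|_Γ = H. -/
/-- Two vertices of `ℤ²` are adjacent iff their Euclidean distance is `1`. -/
def adj (u v : ℤ × ℤ) : Prop := (u.1 - v.1) ^ 2 + (u.2 - v.2) ^ 2 = 1

instance : DecidableRel adj := fun u v => by unfold adj; infer_instance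

/-- The reduced Laplacian of a finite domain `Γ ⊂ ℤ²`. -/
def lap {R : Type*} [CommRing R] (Γ : Finset (ℤ × ℤ)) (f : ↥Γ → R) : ↥Γ → R :=
  fun v => (∑ w ∈ Γ.attach.filter (fun w => adj w.1 v.1), f w) - 4 * f v

lemma lap_add {R : Type*} [CommRing R] (Γ : Finset (ℤ × ℤ)) (f g : ↥Γ → R) :
    lap Γ (f + g) = lap Γ f + lap Γ g := by
  funext v; simp [lap, Finset.sum_add_distrib]; ring

lemma lap_neg {R : Type*} [CommRing R] (Γ : Finset (ℤ × ℤ)) (f : ↥Γ → R) :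
    lap Γ (-f) = -(lap Γ f) := by
  funext v; simp [lap]; ring

lemma lap_smul {R : Type*} [CommRing R] (Γ : Finset (ℤ × ℤ)) (c : R) (f : ↥Γ → R) :
    lap Γ (c • f) = c • lap Γ f := by
  funext v
  simp only [lap, Pi.smul_apply, smul_eq_mul, mul_sub, Finset.mul_sum]
  ring

lemma lap_zero {R : Type*} [CommRing R] (Γ : Finset (ℤ × ℤ)) :
    lap Γ (0 : ↥Γ → R) = 0 := by
  funext v; simp [lap]

/-- The boundary `∂Γ`: vertices of `Γ` adjacent to some vertex of `ℤ² \ Γ`. -/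
noncomputable def boundary (Γ : Finset (ℤ × ℤ)) : Finset (ℤ × ℤ) :=
  @Finset.filter _ (fun v => ∃ w : ℤ × ℤ, w ∉ Γ ∧ adj w v) (Classical.decPred _) Γ

lemma boundary_subset (Γ : Finset (ℤ × ℤ)) : boundary Γ ⊆ Γ :=
  @Finset.filter_subset _ (fun v => ∃ w : ℤ × ℤ, w ∉ Γ ∧ adj w v) (Classical.decPred _) Γ

/-- A function on `Γ` is harmonic if its Laplacian vanishes on the interior `Γ \ ∂Γ`. -/
def Harmonic {R : Type*} [CommRing R] (Γ : Finset (ℤ × ℤ)) (f : ↥Γ → R) : Prop :=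
  ∀ v : ↥Γ, (v : ℤ × ℤ) ∉ boundary Γ → lap Γ f v = 0

/-- `Γ ⊂ ℤ²` is a convex domain if it is the set of lattice points of a
convex open subset of `ℝ²`. -/
def IsConvexDomain (Γ : Finset (ℤ × ℤ)) : Prop :=
  ∃ P : Set (ℝ × ℝ), Convex ℝ P ∧ IsOpen P ∧
    ∀ v : ℤ × ℤ, v ∈ Γ ↔ ((v.1 : ℝ), (v.2 : ℝ)) ∈ P

/-- The reduced Laplacian as an additive group homomorphism on `ℤ^Γ`. -/
def lapHom (Γ : Finset (ℤ × ℤ)) : (↥Γ → ℤ) →+ (↥Γ → ℤ) where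
  toFun := lap Γ
  map_zero' := lap_zero Γ
  map_add' := lap_add Γ

/-- The sandpile group `G_Γ = ℤ^Γ / Δ_Γ(ℤ^Γ)`. -/
def SandpileGroup (Γ : Finset (ℤ × ℤ)) : Type :=
  (↥Γ → ℤ) ⧸ (lapHom Γ).range

instance (Γ : Finset (ℤ × ℤ)) : AddCommGroup (SandpileGroup Γ) :=
  inferInstanceAs (AddCommGroup ((↥Γ → ℤ) ⧸ (lapHom Γ).range))

/-- The canonical projection `ℤ^Γ → G_Γ`. -/
def sandMk (Γ : Finset (ℤ × ℤ)) : (↥Γ → ℤ) →+ SandpileGroup Γ :=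
  QuotientAddGroup.mk' _

/-- The Laplacian at a vertex `v` of a function `f` relative to a set `S ⊆ ℤ²`:
the sum of `f` over the neighbors of `v` lying in `S`, minus `4·f(v)`. -/
noncomputable def lapAt (S : Set (ℤ × ℤ)) (f : ℤ × ℤ → ℤ) (v : ℤ × ℤ) : ℤ :=
  (∑ᶠ w ∈ {w : ℤ × ℤ | w ∈ S ∧ adj w v}, f w) - 4 * f v

/-- `f` is harmonic on `S`: its Laplacian vanishes at every interior vertex of `S`
(a vertex of `S` all of whose neighbors lie in `S`). -/
noncomputable def HarmOn (S : Set (ℤ × ℤ)) (f : ℤ × ℤ → ℤ) : Prop :=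
  ∀ v ∈ S, (∀ w : ℤ × ℤ, adj w v → w ∈ S) → lapAt S f v = 0

/-- One extension step: adjoin every vertex outside `S` adjacent to a vertex of `S`
having exactly three neighbors in `S`. -/
def extStep (S : Set (ℤ × ℤ)) : Set (ℤ × ℤ) :=
  S ∪ {v | v ∉ S ∧ ∃ w ∈ S, adj v w ∧ {u : ℤ × ℤ | u ∈ S ∧ adj u w}.ncard = 3}

/-- The diamond hull of `S`: the union of all iterates of `extStep`. -/
def diamondHull (S : Set (ℤ × ℤ)) : Set (ℤ × ℤ) :=
  ⋃ k : ℕ, extStep^[k] S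

/-!
Uniqueness: a vertex `v` added by `extStep` is the only neighbour outside the current set
of some vertex `w` in it, so harmonicity at `w` determines the value at `v` from values that
are already fixed.

Existence: call a finite set lattice convex if it contains every lattice point of its convex
hull. If `A` is lattice convex and `v ∉ A`, at most one `w ∈ A` has `v` as its only neighbour
outside `A`, so a harmonic function on `A` extends harmonically to `A ∪ {v}` by solving for the
value at `v` at that `w`. Adding to `A` a point of `B \ A` nearest to the convex hull of `A`
keeps it lattice convex, so harmonic functions on `Γ` extend to any lattice-convex `B ⊇ Γ`;
take for `B` a diamond `|x + y|, |x - y| ≤ N`. A diamond is closed under `extStep`, because a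
forced vertex shares its `x + y` with one neighbour of the forcing vertex and its `x - y` with
another; hence it contains the diamond hull, where the extension stays harmonic.
-/

lemma adj_iff {u v : ℤ × ℤ} : adj u v ↔
    u = (v.1 + 1, v.2) ∨ u = (v.1 - 1, v.2) ∨ u = (v.1, v.2 + 1) ∨ u = (v.1, v.2 - 1) := by
  obtain ⟨x, y⟩ := u
  obtain ⟨a, b⟩ := v
  simp only [adj, Prod.mk.injEq]
  constructor
  · intro h
    obtain ⟨p, rfl⟩ : ∃ p, x = a + p := ⟨x - a, by ring⟩
    obtain ⟨q, rfl⟩ : ∃ q, y = b + q := ⟨y - b, by ring⟩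
    obtain ⟨hp₁, hp₂⟩ := abs_le.1 ((sq_le_one_iff_abs_le_one p).1 (by nlinarith [sq_nonneg q]))
    obtain ⟨hq₁, hq₂⟩ := abs_le.1 ((sq_le_one_iff_abs_le_one q).1 (by nlinarith [sq_nonneg p]))
    interval_cases p <;> interval_cases q <;> simp_all <;> omega
  · rintro (⟨rfl, rfl⟩ | ⟨rfl, rfl⟩ | ⟨rfl, rfl⟩ | ⟨rfl, rfl⟩) <;> ring

lemma adj_congr_sub {u v u' v' : ℤ × ℤ} (h : u - v = u' - v') : adj u v ↔ adj u' v' := by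
  simp only [adj, ← Prod.fst_sub, ← Prod.snd_sub, h]

lemma adj.ne {u v : ℤ × ℤ} (h : adj u v) : u ≠ v := by
  rintro rfl
  simp [adj] at h

def nbrFinset (v : ℤ × ℤ) : Finset (ℤ × ℤ) :=
  {(v.1 + 1, v.2), (v.1 - 1, v.2), (v.1, v.2 + 1), (v.1, v.2 - 1)}

lemma mem_nbrFinset {u v : ℤ × ℤ} : u ∈ nbrFinset v ↔ adj u v := by
  simp [nbrFinset, adj_iff]

lemma card_nbrFinset (v : ℤ × ℤ) : (nbrFinset v).card = 4 := by
  rw [nbrFinset, Finset.card_insert_of_notMem, Finset.card_insert_of_notMem,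
    Finset.card_pair] <;> simp [Prod.ext_iff] <;> omega

lemma lapAt_eq_sum_nbrFinset {S : Set (ℤ × ℤ)} {w : ℤ × ℤ} (hw : ∀ u, adj u w → u ∈ S)
    (f : ℤ × ℤ → ℤ) : lapAt S f w = ∑ u ∈ nbrFinset w, f u - 4 * f w := by
  have : {u | u ∈ S ∧ adj u w} = ↑(nbrFinset w) := by
    ext u
    simpa [mem_nbrFinset] using hw u
  rw [lapAt, this, finsum_mem_coe_finset]

lemma lapAt_eq_zero_iff {S : Set (ℤ × ℤ)} {v w : ℤ × ℤ} (hw : ∀ u, adj u w → u ∈ S)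
    (hvw : adj v w) (f : ℤ × ℤ → ℤ) :
    lapAt S f w = 0 ↔ f v = 4 * f w - ∑ u ∈ (nbrFinset w).erase v, f u := by
  rw [lapAt_eq_sum_nbrFinset hw, ← Finset.add_sum_erase _ _ (mem_nbrFinset.2 hvw)]
  omega

lemma HarmOn.mono {S T : Set (ℤ × ℤ)} {f : ℤ × ℤ → ℤ} (hf : HarmOn T f) (hST : S ⊆ T) :
    HarmOn S f := by
  intro w hwS hw
  have hwT : ∀ u, adj u w → u ∈ T := fun u hu => hST (hw u hu)
  rw [lapAt_eq_sum_nbrFinset hw, ← lapAt_eq_sum_nbrFinset hwT]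
  exact hf w (hST hwS) hwT

/-- Harmonicity at `w` then determines the value at `v` from the values on `S`. -/
def Forces (S : Set (ℤ × ℤ)) (w v : ℤ × ℤ) : Prop :=
  w ∈ S ∧ adj v w ∧ ∀ u, adj u w → u ≠ v → u ∈ S

lemma Forces.mono {S T : Set (ℤ × ℤ)} {w v : ℤ × ℤ} (h : Forces S w v) (hST : S ⊆ T) :
    Forces T w v :=
  ⟨hST h.1, h.2.1, fun u hu huv => hST (h.2.2 u hu huv)⟩

lemma mem_or_exists_forces_of_mem_extStep {S : Set (ℤ × ℤ)} {v : ℤ × ℤ} (hv : v ∈ extStep S) :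
    v ∈ S ∨ ∃ w, Forces S w v := by
  rcases hv with hv | ⟨hvS, w, hwS, hvw, hcard⟩
  · exact .inl hv
  refine .inr ⟨w, hwS, hvw, fun u hu huv => ?_⟩
  have hsub : {u | u ∈ S ∧ adj u w} ⊆ ↑((nbrFinset w).erase v) := fun u hu =>
    Finset.mem_erase.2 ⟨fun h => hvS (h ▸ hu.1), mem_nbrFinset.2 hu.2⟩
  have heq := Set.eq_of_subset_of_ncard_le hsub (by
    rw [hcard, Set.ncard_coe_finset, Finset.card_erase_of_mem (mem_nbrFinset.2 hvw),
      card_nbrFinset]) (Finset.finite_toSet _)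
  have : u ∈ (↑((nbrFinset w).erase v) : Set (ℤ × ℤ)) :=
    Finset.mem_erase.2 ⟨huv, mem_nbrFinset.2 hu⟩
  exact (heq ▸ this).1

lemma extStep_subset {S T : Set (ℤ × ℤ)} (hST : S ⊆ T) (hT : ∀ w v, Forces T w v → v ∈ T) :
    extStep S ⊆ T := fun v hv =>
  (mem_or_exists_forces_of_mem_extStep hv).elim (fun h => hST h)
    fun ⟨w, hw⟩ => hT w v (hw.mono hST)

lemma diamondHull_subset {S T : Set (ℤ × ℤ)} (hST : S ⊆ T)
    (hT : ∀ w v, Forces T w v → v ∈ T) : diamondHull S ⊆ T := by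
  refine Set.iUnion_subset fun k => ?_
  induction k with
  | zero => exact hST
  | succ k ih =>
    rw [Function.iterate_succ_apply']
    exact extStep_subset ih hT

lemma Forces.apply_eq_of_harmOn {S T : Set (ℤ × ℤ)} {w v : ℤ × ℤ} {φ ψ : ℤ × ℤ → ℤ}
    (h : Forces S w v) (hST : S ⊆ T) (hvT : v ∈ T) (hφ : HarmOn T φ) (hψ : HarmOn T ψ)
    (hS : Set.EqOn φ ψ S) : φ v = ψ v := by
  obtain ⟨hwS, hvw, hnbr⟩ := h
  have hw : ∀ u, adj u w → u ∈ T := fun u hu =>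
    if huv : u = v then huv ▸ hvT else hST (hnbr u hu huv)
  rw [(lapAt_eq_zero_iff hw hvw φ).1 (hφ w (hST hwS) hw),
    (lapAt_eq_zero_iff hw hvw ψ).1 (hψ w (hST hwS) hw), hS hwS]
  congr 1
  refine Finset.sum_congr rfl fun u hu => ?_
  obtain ⟨huv, hu⟩ := Finset.mem_erase.1 hu
  exact hS (hnbr u (mem_nbrFinset.1 hu) huv)

lemma eqOn_diamondHull {S : Set (ℤ × ℤ)} {φ ψ : ℤ × ℤ → ℤ} (hφ : HarmOn (diamondHull S) φ)
    (hψ : HarmOn (diamondHull S) ψ) (hS : Set.EqOn φ ψ S) : Set.EqOn φ ψ (diamondHull S) := by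
  have hsub (k : ℕ) : extStep^[k] S ⊆ diamondHull S := Set.subset_iUnion (extStep^[·] S) k
  suffices ∀ k, Set.EqOn φ ψ (extStep^[k] S) from fun v hv =>
    let ⟨k, hk⟩ := Set.mem_iUnion.1 hv
    this k hk
  intro k
  induction k with
  | zero => exact hS
  | succ k ih =>
    intro v hv
    have hvD := hsub (k + 1) hv
    rw [Function.iterate_succ_apply'] at hv
    rcases mem_or_exists_forces_of_mem_extStep hv with hv | ⟨w, hw⟩
    · exact ih hv
    · exact hw.apply_eq_of_harmOn (hsub k) hvD hφ hψ ih

def toPlane (p : ℤ × ℤ) : ℝ × ℝ := ((p.1 : ℝ), (p.2 : ℝ))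

lemma toPlane_injective : Function.Injective toPlane := fun p q h => by
  simp only [toPlane, Prod.ext_iff, Int.cast_inj] at h
  exact Prod.ext h.1 h.2

lemma toPlane_add (p q : ℤ × ℤ) : toPlane (p + q) = toPlane p + toPlane q := by
  simp [toPlane]

def IsLatticeConvex (A : Finset (ℤ × ℤ)) : Prop :=
  ∀ z, toPlane z ∈ convexHull ℝ (toPlane '' ↑A) → z ∈ A

lemma isLatticeConvex_of_convex {A : Finset (ℤ × ℤ)} {C : Set (ℝ × ℝ)} (hC : Convex ℝ C)
    (hA : ∀ v, v ∈ A ↔ toPlane v ∈ C) : IsLatticeConvex A := fun z hz =>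
  (hA z).2 <| convexHull_min (Set.image_subset_iff.2 fun v hv => (hA v).1 hv) hC hz

lemma IsConvexDomain.isLatticeConvex {Γ : Finset (ℤ × ℤ)} (h : IsConvexDomain Γ) :
    IsLatticeConvex Γ :=
  let ⟨_, hP, _, hΓ⟩ := h
  isLatticeConvex_of_convex hP hΓ

lemma IsLatticeConvex.mem_of_add_eq {A : Finset (ℤ × ℤ)} (hA : IsLatticeConvex A)
    {x y z : ℤ × ℤ} (hx : x ∈ A) (hy : y ∈ A) (h : x + y = z + z) : z ∈ A := by
  refine hA z (segment_subset_convexHull (Set.mem_image_of_mem _ hx)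
    (Set.mem_image_of_mem _ hy) ⟨1 / 2, 1 / 2, by norm_num, by norm_num, by norm_num, ?_⟩)
  rw [← smul_add, ← toPlane_add, h, toPlane_add, ← two_smul ℝ, smul_smul]
  norm_num

lemma IsLatticeConvex.exists_adj_notMem {A : Finset (ℤ × ℤ)} (hA : IsLatticeConvex A)
    {v : ℤ × ℤ} (hv : v ∉ A) : ∃ u, adj u v ∧ u ∉ A := by
  by_contra! h
  exact hv <| hA.mem_of_add_eq (x := (v.1 + 1, v.2)) (y := (v.1 - 1, v.2))
    (h _ (adj_iff.2 (.inl rfl))) (h _ (adj_iff.2 (.inr (.inl rfl))))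
    (Prod.ext (by simp) (by simp))

/-- If `w₁ ≠ w₂` both force `v`, then `w₁ + v - w₂` and `w₂ + v - w₁` are neighbours of
`w₁` and `w₂` other than `v`, and `v` is their midpoint. -/
lemma IsLatticeConvex.forces_unique {A : Finset (ℤ × ℤ)} (hA : IsLatticeConvex A)
    {v w₁ w₂ : ℤ × ℤ} (hv : v ∉ A) (h₁ : Forces ↑A w₁ v) (h₂ : Forces ↑A w₂ v) : w₁ = w₂ := by
  by_contra hne
  have hu₁ : w₁ + v - w₂ ∈ A := h₁.2.2 _ ((adj_congr_sub (by abel)).2 h₂.2.1) (by grind)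
  have hu₂ : w₂ + v - w₁ ∈ A := h₂.2.2 _ ((adj_congr_sub (by abel)).2 h₁.2.1) (by grind)
  exact hv (hA.mem_of_add_eq hu₁ hu₂ (by abel))

lemma exists_harmOn_insert {A : Finset (ℤ × ℤ)} (hA : IsLatticeConvex A) {v : ℤ × ℤ}
    (hv : v ∉ A) {f : ℤ × ℤ → ℤ} (hf : HarmOn ↑A f) :
    ∃ g : ℤ × ℤ → ℤ, HarmOn ↑(insert v A) g ∧ ∀ u ∈ A, g u = f u := by
  obtain ⟨c, hc⟩ : ∃ c : ℤ, ∀ w, Forces ↑A w v →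
      c = 4 * f w - ∑ u ∈ (nbrFinset w).erase v, f u := by
    by_cases h : ∃ w, Forces ↑A w v
    · obtain ⟨w, hw⟩ := h
      exact ⟨_, fun w' hw' => by rw [hA.forces_unique hv hw' hw]⟩
    · exact ⟨0, fun w hw => absurd ⟨w, hw⟩ h⟩
  have hg : ∀ u ∈ A, Function.update f v c u = f u := fun u hu =>
    Function.update_of_ne (ne_of_mem_of_not_mem hu hv) _ _
  refine ⟨Function.update f v c, fun w hw hwnbr => ?_, hg⟩
  have hnbr : ∀ u, adj u w → u = v ∨ u ∈ A := fun u hu => by simpa using hwnbr u hu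
  have hwA : w ∈ A := (Finset.mem_insert.1 hw).resolve_left <| by
    rintro rfl
    obtain ⟨u, hu, huA⟩ := hA.exists_adj_notMem hv
    exact huA ((hnbr u hu).resolve_left hu.ne)
  by_cases hvw : adj v w
  · have hforces : Forces ↑A w v := ⟨hwA, hvw, fun u hu huv => (hnbr u hu).resolve_left huv⟩
    rw [lapAt_eq_zero_iff hwnbr hvw, Function.update_self, hg w hwA,
      Finset.sum_congr rfl fun u hu => Function.update_of_ne (Finset.mem_erase.1 hu).1 _ _]
    exact hc w hforces
  · have hwnbrA : ∀ u, adj u w → u ∈ A := fun u hu =>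
      (hnbr u hu).resolve_left fun huv => hvw (huv ▸ hu)
    have := hf w hwA hwnbrA
    rw [lapAt_eq_sum_nbrFinset hwnbrA] at this
    rwa [lapAt_eq_sum_nbrFinset hwnbr, hg w hwA,
      Finset.sum_congr rfl fun u hu => hg u (hwnbrA u (mem_nbrFinset.1 hu))]

lemma Metric.infDist_lt_of_mem_segment {E : Type*} [NormedAddCommGroup E] [NormedSpace ℝ E]
    {K : Set E} (hKconv : Convex ℝ K) (hK : IsCompact K) {x q z : E} (hx : x ∉ K) (hq : q ∈ K)
    (hz : z ∈ segment ℝ x q) (hzx : z ≠ x) : Metric.infDist z K < Metric.infDist x K := by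
  obtain ⟨a, b, ha, hb, hab, rfl⟩ := hz
  have hKne : K.Nonempty := ⟨q, hq⟩
  obtain ⟨p, hp, hxp⟩ := hK.exists_infDist_eq_dist hKne x
  have hpos : 0 < Metric.infDist x K := (hK.isClosed.notMem_iff_infDist_pos hKne).1 hx
  have ha1 : a < 1 := lt_of_le_of_ne (by linarith) fun ha1 => hzx (by
    rw [ha1, show b = 0 by linarith, one_smul, zero_smul, add_zero])
  calc Metric.infDist (a • x + b • q) K ≤ dist (a • x + b • q) (a • p + b • q) :=
        Metric.infDist_le_dist_of_mem (hKconv hp hq ha hb hab)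
    _ = a * Metric.infDist x K := by
        rw [dist_add_right, dist_smul₀, Real.norm_of_nonneg ha, hxp]
    _ < Metric.infDist x K := by nlinarith

/-- Adding a vertex of `B \ A` nearest to the convex hull of `A` keeps `A` lattice convex. -/
lemma exists_insert_isLatticeConvex {A B : Finset (ℤ × ℤ)} (hA : IsLatticeConvex A)
    (hB : IsLatticeConvex B) (hAB : A ⊆ B) (hBA : (B \ A).Nonempty) :
    ∃ v ∈ B \ A, IsLatticeConvex (insert v A) := by
  set K := convexHull ℝ (toPlane '' ↑A)
  obtain ⟨v, hv, hvmin⟩ := Finset.exists_min_image (B \ A)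
    (fun u => Metric.infDist (toPlane u) K) hBA
  obtain ⟨hvB, hvA⟩ := Finset.mem_sdiff.1 hv
  refine ⟨v, hv, fun z hz => ?_⟩
  rw [Finset.mem_insert]
  by_contra! hzvA
  obtain ⟨hzv, hzA⟩ := hzvA
  rcases A.eq_empty_or_nonempty with rfl | hAne
  · simp only [insert_empty_eq, Finset.coe_singleton, Set.image_singleton,
      convexHull_singleton, Set.mem_singleton_iff] at hz
    exact hzv (toPlane_injective hz)
  rw [Finset.coe_insert, Set.image_insert_eq, convexHull_insert (hAne.to_set.image _),
    convexJoin_singleton_left, Set.mem_iUnion₂] at hz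
  obtain ⟨q, hq, hzq⟩ := hz
  have hzB : z ∈ B := hB z <| convex_convexHull ℝ _ |>.segment_subset
    (subset_convexHull ℝ _ (Set.mem_image_of_mem _ hvB))
    (convexHull_mono (Set.image_mono (Finset.coe_subset.2 hAB)) hq) hzq
  have := hvmin z (Finset.mem_sdiff.2 ⟨hzB, hzA⟩)
  exact this.not_gt <| Metric.infDist_lt_of_mem_segment (convex_convexHull ℝ _)
    ((A.finite_toSet.image _).isCompact_convexHull ℝ) (fun h => hvA (hA v h)) hq hzq
    (toPlane_injective.ne hzv)

lemma exists_harmOn_extension {A B : Finset (ℤ × ℤ)} (hA : IsLatticeConvex A)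
    (hB : IsLatticeConvex B) (hAB : A ⊆ B) {f : ℤ × ℤ → ℤ} (hf : HarmOn ↑A f) :
    ∃ g : ℤ × ℤ → ℤ, HarmOn ↑B g ∧ ∀ u ∈ A, g u = f u := by
  induction hn : (B \ A).card generalizing A f with
  | zero =>
    have hBA : B = A := (Finset.sdiff_eq_empty_iff_subset.1 (Finset.card_eq_zero.1 hn)).antisymm hAB
    exact ⟨f, hBA ▸ hf, fun _ _ => rfl⟩
  | succ n ih =>
    obtain ⟨v, hv, hvA⟩ := exists_insert_isLatticeConvex hA hB hAB (Finset.card_pos.1 (by omega))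
    obtain ⟨f₁, hf₁, hf₁A⟩ := exists_harmOn_insert hA (Finset.mem_sdiff.1 hv).2 hf
    obtain ⟨g, hg, hgA⟩ := ih hvA (Finset.insert_subset (Finset.mem_sdiff.1 hv).1 hAB) hf₁
      (by rw [Finset.sdiff_insert, Finset.card_erase_of_mem hv, hn, Nat.add_sub_cancel])
    exact ⟨g, hg, fun u hu => (hgA u (Finset.mem_insert_of_mem hu)).trans (hf₁A u hu)⟩

noncomputable def diamond (N : ℤ) : Finset (ℤ × ℤ) :=
  (Finset.Icc (-N) N ×ˢ Finset.Icc (-N) N).filter fun v => |v.1 + v.2| ≤ N ∧ |v.1 - v.2| ≤ N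

lemma mem_diamond {N : ℤ} {v : ℤ × ℤ} : v ∈ diamond N ↔ |v.1 + v.2| ≤ N ∧ |v.1 - v.2| ≤ N := by
  simp only [diamond, Finset.mem_filter, Finset.mem_product, Finset.mem_Icc, abs_le]
  omega

lemma isLatticeConvex_diamond (N : ℤ) : IsLatticeConvex (diamond N) := by
  refine isLatticeConvex_of_convex (C := {p | |p.1 + p.2| ≤ N ∧ |p.1 - p.2| ≤ N}) ?_ fun v => ?_
  · have hC : {p : ℝ × ℝ | |p.1 + p.2| ≤ N ∧ |p.1 - p.2| ≤ N} =
        (LinearMap.fst ℝ ℝ ℝ + LinearMap.snd ℝ ℝ ℝ) ⁻¹' Set.Icc (-N) N ∩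
          (LinearMap.fst ℝ ℝ ℝ - LinearMap.snd ℝ ℝ ℝ) ⁻¹' Set.Icc (-N) N := by
      ext p
      simp [abs_le]
    rw [hC]
    exact ((convex_Icc _ _).linear_preimage _).inter ((convex_Icc _ _).linear_preimage _)
  · rw [mem_diamond]
    simp only [toPlane, Set.mem_ofPred_eq]
    norm_cast

lemma exists_subset_diamond (Γ : Finset (ℤ × ℤ)) : ∃ N, Γ ⊆ diamond N := by
  obtain ⟨N, hN⟩ := (Γ.image fun v => |v.1 + v.2| + |v.1 - v.2|).exists_le
  refine ⟨N, fun v hv => mem_diamond.2 ?_⟩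
  have := hN _ (Finset.mem_image_of_mem _ hv)
  constructor <;> linarith [abs_nonneg (v.1 + v.2), abs_nonneg (v.1 - v.2)]

lemma Forces.exists_add_eq_and_exists_sub_eq {S : Set (ℤ × ℤ)} {w v : ℤ × ℤ}
    (h : Forces S w v) :
    (∃ u ∈ S, u.1 + u.2 = v.1 + v.2) ∧ ∃ u ∈ S, u.1 - u.2 = v.1 - v.2 := by
  obtain ⟨-, hvw, hnbr⟩ := h
  refine ⟨⟨(w.1 + (v.2 - w.2), w.2 + (v.1 - w.1)), hnbr _ ?_ ?_, by ring⟩,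
    ⟨(w.1 - (v.2 - w.2), w.2 - (v.1 - w.1)), hnbr _ ?_ ?_, by ring⟩⟩ <;>
  rcases adj_iff.1 hvw with rfl | rfl | rfl | rfl <;> simp [adj, Prod.ext_iff]

lemma mem_diamond_of_forces {N : ℤ} {w v : ℤ × ℤ} (h : Forces ↑(diamond N) w v) :
    v ∈ diamond N := by
  obtain ⟨⟨u₁, hu₁, h₁⟩, ⟨u₂, hu₂, h₂⟩⟩ := h.exists_add_eq_and_exists_sub_eq
  exact mem_diamond.2 ⟨h₁ ▸ (mem_diamond.1 hu₁).1, h₂ ▸ (mem_diamond.1 hu₂).2⟩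

theorem harmonic_extends_to_diamondHull_general (Γ : Finset (ℤ × ℤ))
    (hconv : IsConvexDomain Γ) (H : ℤ × ℤ → ℤ) (hH : HarmOn (↑Γ : Set (ℤ × ℤ)) H) :
    ∃ φ : ℤ × ℤ → ℤ,
      (HarmOn (diamondHull (↑Γ : Set (ℤ × ℤ))) φ ∧ ∀ v ∈ Γ, φ v = H v) ∧
      ∀ ψ : ℤ × ℤ → ℤ, HarmOn (diamondHull (↑Γ : Set (ℤ × ℤ))) ψ →
        (∀ v ∈ Γ, ψ v = H v) →
        ∀ v ∈ diamondHull (↑Γ : Set (ℤ × ℤ)), ψ v = φ v := by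
  obtain ⟨N, hΓN⟩ := exists_subset_diamond Γ
  obtain ⟨φ, hφ, hφΓ⟩ :=
    exists_harmOn_extension hconv.isLatticeConvex (isLatticeConvex_diamond N) hΓN hH
  have hφD : HarmOn (diamondHull ↑Γ) φ :=
    hφ.mono (diamondHull_subset (Finset.coe_subset.2 hΓN) fun _ _ => mem_diamond_of_forces)
  refine ⟨φ, ⟨hφD, hφΓ⟩, fun ψ hψ hψΓ => eqOn_diamondHull hψ hφD fun v hv => ?_⟩
  rw [hψΓ v hv, hφΓ v hv]

/-- Every integer-valued harmonic function on a finite nonempty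
convex domain `Γ ⊂ ℤ²` extends uniquely to an integer-valued harmonic function on
the diamond hull of `Γ` (uniqueness meaning: any two harmonic extensions agree on
the diamond hull). -/
theorem harmonic_extends_to_diamondHull (Γ : Finset (ℤ × ℤ)) (hne : Γ.Nonempty)
    (hconv : IsConvexDomain Γ) (H : ℤ × ℤ → ℤ) (hH : HarmOn (↑Γ : Set (ℤ × ℤ)) H) :
    ∃ φ : ℤ × ℤ → ℤ,
      (HarmOn (diamondHull (↑Γ : Set (ℤ × ℤ))) φ ∧ ∀ v ∈ Γ, φ v = H v) ∧
      ∀ ψ : ℤ × ℤ → ℤ, HarmOn (diamondHull (↑Γ : Set (ℤ × ℤ))) ψ →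
        (∀ v ∈ Γ, ψ v = H v) →
        ∀ v ∈ diamondHull (↑Γ : Set (ℤ × ℤ)), ψ v = φ v :=
  harmonic_extends_to_diamondHull_general Γ hconv H hH
end

section
/- Let H : Q → ℤ be the function on the quadrant Q determined by the boundary conditions and the harmonicity recursion described in the context. Then for all (x,y) ∈ Q, the reflection identity (x − y)·H(x,y) = −(x + y)·H(x,−y) holds. -/
/-!
Let `lap` be the discrete Laplacian with step 2 and `G x y = (x - y) * H x y`. The discrete
product rule `lap G = (x - y + 2) * lap H + 4 * D`, where `D = antidiagDiff H`, reduces the claim,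
namely that `G x y + G x (-y)` vanishes, to the vanishing of `D x y + D x (-y)`. Both
symmetrizations satisfy the harmonicity recursion (the second one from the next column on, as `D`
is built from shifts of `H`), and a solution of the recursion on the quadrant is zero as soon as it
vanishes on the two outermost diagonals on either side. There both vanish, by (i), (ii) and closed
formulas for `H` on the next two diagonals.
-/

theorem Int.odd_induction {P : ℤ → Prop} {a : ℤ} (ha : Odd a) (base : P a)
    (step : ∀ x, Odd x → a ≤ x → P x → P (x + 2)) {x : ℤ} (hx : Odd x) (hax : a ≤ x) :
    P x := by
  obtain ⟨n, rfl⟩ : ∃ n : ℕ, x = a + 2 * n := by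
    obtain ⟨k, rfl⟩ := ha
    obtain ⟨m, rfl⟩ := hx
    exact ⟨(m - k).toNat, by omega⟩
  induction n with
  | zero => simpa using base
  | succ n ih =>
    have hodd : Odd (a + 2 * n) := ha.add_even (even_two_mul _)
    have h := step _ hodd (by omega) (ih hodd (by omega))
    rwa [Nat.cast_succ, mul_add_one, ← add_assoc]

namespace QuadrantReflection

def lap (f : ℤ → ℤ → ℤ) (x y : ℤ) : ℤ :=
  f (x + 2) y + f (x - 2) y + f x (y + 2) + f x (y - 2) - 4 * f x y

def ySymm (f : ℤ → ℤ → ℤ) (x y : ℤ) : ℤ := f x y + f x (-y)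

def antidiagDiff (f : ℤ → ℤ → ℤ) (x y : ℤ) : ℤ :=
  2 * f x y - f (x - 2) y - f x (y + 2)

theorem ySymm_neg (f : ℤ → ℤ → ℤ) (x y : ℤ) : ySymm f x (-y) = ySymm f x y := by
  rw [ySymm, ySymm, neg_neg, add_comm]

theorem lap_ySymm (f : ℤ → ℤ → ℤ) (x y : ℤ) :
    lap (ySymm f) x y = lap f x y + lap f x (-y) := by
  simp only [lap, ySymm]
  ring_nf

theorem lap_antidiagDiff (f : ℤ → ℤ → ℤ) (x y : ℤ) :
    lap (antidiagDiff f) x y = antidiagDiff (lap f) x y := by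
  simp only [lap, antidiagDiff]
  ring_nf

theorem lap_mul_sub (f : ℤ → ℤ → ℤ) (x y : ℤ) :
    lap (fun x y ↦ (x - y) * f x y) x y = (x - y + 2) * lap f x y + 4 * antidiagDiff f x y := by
  simp only [lap, antidiagDiff]
  ring

theorem lap_comp_add_left (f : ℤ → ℤ → ℤ) (a x y : ℤ) :
    lap (fun x y ↦ f (x + a) y) x y = lap f (x + a) y := by
  simp only [lap]
  ring_nf

section Uniqueness

variable {f : ℤ → ℤ → ℤ}
  (hdiag : ∀ x, Odd x → 1 ≤ x → f x x = 0 ∧ f x (-x) = 0)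
  (hsub : ∀ x, Odd x → 3 ≤ x → f x (x - 2) = 0 ∧ f x (-x + 2) = 0)
include hdiag hsub

theorem eq_zero_of_sub_two_le_abs {x y : ℤ} (hx : Odd x) (hy : Odd y) (hyx : |y| ≤ x)
    (hxy : x - 2 ≤ |y|) : f x y = 0 := by
  obtain ⟨hx1, hcases⟩ :
      1 ≤ x ∧ (y = x ∨ y = -x ∨ (y = x - 2 ∧ 3 ≤ x) ∨ (y = -x + 2 ∧ 3 ≤ x)) := by
    obtain ⟨k, rfl⟩ := hx
    obtain ⟨m, rfl⟩ := hy
    rw [abs_le] at hyx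
    have := le_abs'.mp hxy
    omega
  rcases hcases with rfl | rfl | ⟨rfl, h3⟩ | ⟨rfl, h3⟩
  exacts [(hdiag y hx hx1).1, (hdiag x hx hx1).2, (hsub x hx h3).1, (hsub x hx h3).2]

theorem eq_zero_of_lap_eq_zero (hlap : ∀ x y, Odd x → Odd y → |y| ≤ x - 2 → lap f x y = 0)
    {x y : ℤ} (hx : Odd x) (hy : Odd y) (hyx : |y| ≤ x) : f x y = 0 := by
  suffices h : ∀ n : ℕ, ∀ x y : ℤ, Odd x → Odd y → |y| ≤ x →
      x ≤ 2 * n + 1 → f x y = 0 from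
    h x.toNat x y hx hy hyx (by omega)
  intro n
  induction n with
  | zero =>
    intro x y hx hy hyx hxn
    push_cast at hxn
    exact eq_zero_of_sub_two_le_abs hdiag hsub hx hy hyx (by linarith [abs_nonneg y])
  | succ n ih =>
    intro x y hx hy hyx hxn
    by_cases hband : x - 2 ≤ |y|
    · exact eq_zero_of_sub_two_le_abs hdiag hsub hx hy hyx hband
    have hint : |y| ≤ x - 4 := by
      obtain ⟨k, rfl⟩ := hx
      obtain ⟨m, rfl⟩ := hy
      rw [not_le, abs_lt] at hband
      rw [abs_le]
      omega
    rw [abs_le] at hint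
    have hx2 : Odd (x - 2) := hx.sub_even even_two
    have h := hlap (x - 2) y hx2 hy (abs_le.mpr ⟨by omega, by omega⟩)
    rw [lap, sub_add_cancel] at h
    push_cast at hxn
    have ih' : ∀ x' y', Odd x' → Odd y' → -x' ≤ y' → y' ≤ x' → x' ≤ x - 2 →
        f x' y' = 0 :=
      fun x' y' hx' hy' h₁ h₂ h₃ ↦ ih x' y' hx' hy' (abs_le.mpr ⟨h₁, h₂⟩) (by omega)
    have e₁ := ih' (x - 2) y hx2 hy (by omega) (by omega) le_rfl
    have e₂ := ih' (x - 2 - 2) y (hx2.sub_even even_two) hy (by omega) (by omega) (by omega)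
    have e₃ := ih' (x - 2) (y + 2) hx2 (hy.add_even even_two) (by omega) (by omega) le_rfl
    have e₄ := ih' (x - 2) (y - 2) hx2 (hy.sub_even even_two) (by omega) (by omega) le_rfl
    linear_combination h - e₂ - e₃ - e₄ + 4 * e₁

end Uniqueness

def sgn (x : ℤ) : ℤ := (-1) ^ ((x - 1) / 2).toNat

theorem sgn_add_two {x : ℤ} (hx : 1 ≤ x) : sgn (x + 2) = -sgn x := by
  rw [sgn, sgn, show ((x + 2 - 1) / 2).toNat = ((x - 1) / 2).toNat + 1 by omega, pow_succ,
    mul_neg_one]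

theorem sgn_sub_two {x : ℤ} (hx : 3 ≤ x) : sgn (x - 2) = -sgn x := by
  rw [← neg_neg (sgn (x - 2)), ← sgn_add_two (by omega), sub_add_cancel]

structure QuadrantRecursion (H : ℤ → ℤ → ℤ) : Prop where
  diag : ∀ x, Odd x → 1 ≤ x → H x x = sgn x ∧ H x (-x) = 0
  subdiag : ∀ x, Odd x → 3 ≤ x → H x (x - 2) = -(sgn x * (x - 1)) ∧ H x (-x + 2) = sgn x
  lap_eq_zero : ∀ x y, Odd x → Odd y → |y| ≤ x - 2 → lap H x y = 0

namespace QuadrantRecursion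

variable {H : ℤ → ℤ → ℤ} (hH : QuadrantRecursion H)
include hH

theorem next_col {x y : ℤ} (hx : Odd x) (hy : Odd y) (hyx : |y| ≤ x - 2) :
    H (x + 2) y = 4 * H x y - H (x - 2) y - H x (y + 2) - H x (y - 2) := by
  have h := hH.lap_eq_zero x y hx hy hyx
  rw [lap] at h
  linear_combination h

theorem apply_neg_add_two {x : ℤ} (hx : Odd x) (h1x : 1 ≤ x) : H x (-x + 2) = sgn x := by
  obtain h | rfl : 3 ≤ x ∨ x = 1 := by obtain ⟨k, rfl⟩ := hx; omega
  · exact (hH.subdiag x hx h).2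
  · exact (hH.diag 1 hx le_rfl).1

theorem apply_neg_add_four {x : ℤ} (hx : Odd x) (h3x : 3 ≤ x) :
    H x (-x + 4) = -(2 * sgn x * (x - 2)) := by
  refine Int.odd_induction (P := fun x ↦ H x (-x + 4) = -(2 * sgn x * (x - 2)))
    ⟨1, rfl⟩ ?_ ?_ hx h3x
  · simpa [sgn] using (hH.subdiag 3 ⟨1, rfl⟩ le_rfl).1
  · intro x hx h3x ih
    have e := hH.next_col hx (y := -x + 2) (hx.neg.add_even even_two) (by rw [abs_le]; omega)
    rw [show -x + 2 + 2 = -x + 4 by ring, show -x + 2 - 2 = -x by ring, ih,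
      apply_neg_add_two hH hx (by omega), (hH.diag x hx (by omega)).2] at e
    have e' := (hH.diag (x - 2) (hx.sub_even even_two) (by omega)).2
    rw [neg_sub', sub_neg_eq_add] at e'
    rw [show -(x + 2) + 4 = -x + 2 by ring, sgn_add_two (by omega), e, e']
    ring

theorem apply_sub_four {x : ℤ} (hx : Odd x) (h3x : 3 ≤ x) :
    H x (x - 4) = sgn x * (x - 2) ^ 2 := by
  refine Int.odd_induction (P := fun x ↦ H x (x - 4) = sgn x * (x - 2) ^ 2)
    ⟨1, rfl⟩ ?_ ?_ hx h3x
  · simpa [sgn] using (hH.subdiag 3 ⟨1, rfl⟩ le_rfl).2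
  · intro x hx h3x ih
    have e := hH.next_col hx (y := x - 2) (hx.sub_even even_two) (by rw [abs_le]; omega)
    have e' := (hH.diag (x - 2) (hx.sub_even even_two) (by omega)).1
    rw [show x - 2 + 2 = x by ring, show x - 2 - 2 = x - 4 by ring, ih, e', sgn_sub_two h3x,
      (hH.diag x hx (by omega)).1, (hH.subdiag x hx h3x).1] at e
    rw [show x + 2 - 4 = x - 2 by ring, sgn_add_two (by omega), e]
    ring

theorem apply_neg_add_six {x : ℤ} (hx : Odd x) (h3x : 3 ≤ x) :
    H x (-x + 6) = sgn x * (2 * x ^ 2 - 12 * x + 19) := by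
  refine Int.odd_induction (P := fun x ↦ H x (-x + 6) = sgn x * (2 * x ^ 2 - 12 * x + 19))
    ⟨1, rfl⟩ ?_ ?_ hx h3x
  · simpa [sgn] using (hH.diag 3 ⟨1, rfl⟩ (by norm_num)).1
  · intro x hx h3x ih
    have e := hH.next_col hx (y := -x + 4) (hx.neg.add_even (by decide)) (by rw [abs_le]; omega)
    have e' := hH.apply_neg_add_two (hx.sub_even even_two) (by omega)
    rw [neg_sub', sub_neg_eq_add, show -x + 2 + 2 = -x + 4 by ring, sgn_sub_two h3x] at e'
    rw [show -x + 4 + 2 = -x + 6 by ring, show -x + 4 - 2 = -x + 2 by ring, ih, e',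
      hH.apply_neg_add_four hx h3x, hH.apply_neg_add_two hx (by omega)] at e
    rw [show -(x + 2) + 6 = -x + 4 by ring, sgn_add_two (by omega), e]
    ring

theorem antidiagDiff_lap_eq_zero {x y : ℤ} (hx : Odd x) (hy : Odd y) (hyx : |y| ≤ x - 4) :
    antidiagDiff (lap H) x y = 0 := by
  rw [abs_le] at hyx
  rw [antidiagDiff, hH.lap_eq_zero x y hx hy (abs_le.mpr ⟨by omega, by omega⟩),
    hH.lap_eq_zero (x - 2) y (hx.sub_even even_two) hy (abs_le.mpr ⟨by omega, by omega⟩),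
    hH.lap_eq_zero x (y + 2) hx (hy.add_even even_two) (abs_le.mpr ⟨by omega, by omega⟩)]
  ring

theorem ySymm_antidiagDiff_add_two_self {x : ℤ} (hx : Odd x) (h1x : 1 ≤ x) :
    ySymm (antidiagDiff H) (x + 2) x = 0 := by
  have hx2 : Odd (x + 2) := hx.add_even even_two
  obtain ⟨h₁, h₂⟩ := hH.subdiag (x + 2) hx2 (by omega)
  have h₃ := hH.apply_neg_add_four hx2 (by omega)
  rw [add_sub_cancel_right] at h₁
  rw [show -(x + 2) + 2 = -x by ring] at h₂
  rw [show -(x + 2) + 4 = -x + 2 by ring] at h₃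
  simp only [ySymm, antidiagDiff, add_sub_cancel_right, h₁, h₂, h₃, (hH.diag x hx h1x).1,
    (hH.diag x hx h1x).2, (hH.diag (x + 2) hx2 (by omega)).1, sgn_add_two h1x]
  ring

theorem ySymm_antidiagDiff_add_two_sub_two {x : ℤ} (hx : Odd x) (h3x : 3 ≤ x) :
    ySymm (antidiagDiff H) (x + 2) (x - 2) = 0 := by
  have hx2 : Odd (x + 2) := hx.add_even even_two
  have h₁ := (hH.subdiag (x + 2) hx2 (by omega)).1
  have h₂ := hH.apply_sub_four hx2 (by omega)
  have h₃ := hH.apply_neg_add_four hx2 (by omega)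
  have h₄ := hH.apply_neg_add_six hx2 (by omega)
  rw [add_sub_cancel_right] at h₁
  rw [show x + 2 - 4 = x - 2 by ring] at h₂
  rw [show -(x + 2) + 4 = -x + 2 by ring] at h₃
  rw [show -(x + 2) + 6 = -x + 4 by ring] at h₄
  simp only [ySymm, antidiagDiff, add_sub_cancel_right, sub_add_cancel, neg_sub', sub_neg_eq_add,
    show -x + 2 + 2 = -x + 4 by ring, h₁, h₂, h₃, h₄, (hH.subdiag x hx h3x).1,
    (hH.subdiag x hx h3x).2, sgn_add_two (show 1 ≤ x by omega)]
  ring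

theorem ySymm_antidiagDiff_eq_zero {x y : ℤ} (hx : Odd x) (hy : Odd y) (hyx : |y| ≤ x - 2) :
    ySymm (antidiagDiff H) x y = 0 := by
  have key := eq_zero_of_lap_eq_zero (f := fun x y ↦ ySymm (antidiagDiff H) (x + 2) y)
    ?_ ?_ ?_ (hx.sub_even even_two) hy hyx
  · simpa using key
  · intro x hx h1x
    simp only [ySymm_neg]
    exact ⟨hH.ySymm_antidiagDiff_add_two_self hx h1x, hH.ySymm_antidiagDiff_add_two_self hx h1x⟩
  · intro x hx h3x
    rw [show -x + 2 = -(x - 2) by ring, ySymm_neg]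
    exact ⟨hH.ySymm_antidiagDiff_add_two_sub_two hx h3x,
      hH.ySymm_antidiagDiff_add_two_sub_two hx h3x⟩
  · intro x y hx hy hyx
    rw [lap_comp_add_left, lap_ySymm, lap_antidiagDiff, lap_antidiagDiff,
      hH.antidiagDiff_lap_eq_zero (hx.add_even even_two) hy (by linarith),
      hH.antidiagDiff_lap_eq_zero (hx.add_even even_two) hy.neg (by rw [abs_neg]; linarith),
      add_zero]

theorem ySymm_mul_sub_eq_zero {x y : ℤ} (hx : Odd x) (hy : Odd y) (hyx : |y| ≤ x) :
    ySymm (fun x y ↦ (x - y) * H x y) x y = 0 := by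
  refine eq_zero_of_lap_eq_zero ?_ ?_ ?_ hx hy hyx
  · intro x hx h1x
    simp [ySymm, (hH.diag x hx h1x).2]
  · intro x hx h3x
    obtain ⟨h₁, h₂⟩ := hH.subdiag x hx h3x
    have h : ySymm (fun x y ↦ (x - y) * H x y) x (x - 2) = 0 := by
      rw [ySymm, show -(x - 2) = -x + 2 by ring, h₁, h₂]
      ring
    refine ⟨h, ?_⟩
    rwa [show -x + 2 = -(x - 2) by ring, ySymm_neg]
  · intro x y hx hy hyx
    have h := hH.ySymm_antidiagDiff_eq_zero hx hy hyx
    rw [ySymm] at h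
    rw [lap_ySymm, lap_mul_sub, lap_mul_sub, hH.lap_eq_zero x y hx hy hyx,
      hH.lap_eq_zero x (-y) hx hy.neg (by rwa [abs_neg])]
    linear_combination 4 * h

end QuadrantRecursion

end QuadrantReflection

/-- Let `H` be the function on the quadrant
`Q = {(x,y) : x, y odd, 1 ≤ x, |y| ≤ x}` determined by the boundary conditions
(i), (ii) and the harmonicity recursion (iii). Then the reflection identity
`(x − y)·H(x,y) = −(x + y)·H(x,−y)` holds on `Q`. -/
theorem quadrant_reflection_identity (H : ℤ → ℤ → ℤ)
    (h1 : ∀ x : ℤ, Odd x → 1 ≤ x →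
      H x x = (-1) ^ ((x - 1) / 2).toNat ∧ H x (-x) = 0)
    (h2 : ∀ x : ℤ, Odd x → 3 ≤ x →
      H x (x - 2) = -((-1) ^ ((x - 1) / 2).toNat * (x - 1)) ∧
      H x (-x + 2) = (-1) ^ ((x - 1) / 2).toNat)
    (h3 : ∀ x y : ℤ, Odd x → Odd y → |y| ≤ x - 2 →
      4 * H x y = H (x + 2) y + H (x - 2) y + H x (y + 2) + H x (y - 2)) :
    ∀ x y : ℤ, Odd x → Odd y → 1 ≤ x → |y| ≤ x →
      (x - y) * H x y = -(x + y) * H x (-y) := by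
  have hH : QuadrantReflection.QuadrantRecursion H := ⟨h1, h2, fun x y hx hy hyx ↦ by
    rw [QuadrantReflection.lap, h3 x y hx hy hyx]
    ring⟩
  intro x y hx hy _ hyx
  have h := hH.ySymm_mul_sub_eq_zero hx hy hyx
  rw [QuadrantReflection.ySymm, sub_neg_eq_add] at h
  linear_combination h
end

section
/- Let H : Q → ℤ be the function on the quadrant Q determined by the boundary conditions and the harmonicity recursion described in the context. Then for every odd x ≥ 5, H(x,x−4) = (−1)^{(x−1)/2}·(x−2)² and H(x,−x+4) = −(−1)^{(x−1)/2}·(2x−4). -/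
/-!
Both third diagonals are read off the recursion at the points `(x, x - 2)` and `(x, -x + 2)` of the
second diagonals, which expresses `H (x + 2) (±(x - 2))` through known boundary values and
`H x (±(x - 4))`. Induction on `x` then works from `x = 3`, where the claimed formulas are the
values (ii) on the second diagonals.
-/

lemma neg_one_pow_half_toNat_add_two {x : ℤ} (hx : 1 ≤ x) :
    (-1 : ℤ) ^ ((x + 2 - 1) / 2).toNat = -(-1) ^ ((x - 1) / 2).toNat := by
  rw [show ((x + 2 - 1) / 2).toNat = ((x - 1) / 2).toNat + 1 by omega, pow_succ]
  ring

section

variable (H : ℤ → ℤ → ℤ)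

lemma upper_third_diagonal_step
    (h1 : ∀ x : ℤ, Odd x → 1 ≤ x → H x x = (-1) ^ ((x - 1) / 2).toNat)
    (h2 : ∀ x : ℤ, Odd x → 3 ≤ x → H x (x - 2) = -((-1) ^ ((x - 1) / 2).toNat * (x - 1)))
    (h3 : ∀ x y : ℤ, Odd x → Odd y → |y| ≤ x - 2 →
      4 * H x y = H (x + 2) y + H (x - 2) y + H x (y + 2) + H x (y - 2))
    {x : ℤ} (hx : Odd x) (hx3 : 3 ≤ x)
    (ih : H x (x - 4) = (-1) ^ ((x - 1) / 2).toNat * (x - 2) ^ 2) :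
    H (x + 2) (x + 2 - 4) = (-1) ^ ((x + 2 - 1) / 2).toNat * (x + 2 - 2) ^ 2 := by
  have hprev : Odd (x - 2) := hx.sub_even even_two
  have hsign := neg_one_pow_half_toNat_add_two (x := x - 2) (by omega)
  have hrec := h3 x (x - 2) hx hprev (by rw [abs_of_nonneg (by omega)])
  rw [sub_add_cancel] at hsign
  rw [sub_add_cancel, sub_sub, show (2 : ℤ) + 2 = 4 by norm_num] at hrec
  rw [show x + 2 - 4 = x - 2 by ring, neg_one_pow_half_toNat_add_two (by omega)]
  linear_combination -hrec + 4 * h2 x hx hx3 - h1 (x - 2) hprev (by omega) - h1 x hx (by omega)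
    - ih - hsign

lemma lower_third_diagonal_step
    (h1 : ∀ x : ℤ, Odd x → 1 ≤ x → H x (-x) = 0)
    (h2 : ∀ x : ℤ, Odd x → 3 ≤ x → H x (-x + 2) = (-1) ^ ((x - 1) / 2).toNat)
    (h3 : ∀ x y : ℤ, Odd x → Odd y → |y| ≤ x - 2 →
      4 * H x y = H (x + 2) y + H (x - 2) y + H x (y + 2) + H x (y - 2))
    {x : ℤ} (hx : Odd x) (hx3 : 3 ≤ x)
    (ih : H x (-x + 4) = -((-1) ^ ((x - 1) / 2).toNat * (2 * x - 4))) :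
    H (x + 2) (-(x + 2) + 4) = -((-1) ^ ((x + 2 - 1) / 2).toNat * (2 * (x + 2) - 4)) := by
  have hprev : Odd (x - 2) := hx.sub_even even_two
  have hrec := h3 x (-(x - 2)) hx hprev.neg (by rw [abs_neg, abs_of_nonneg (by omega)])
  rw [h1 (x - 2) hprev (by omega), show -(x - 2) + 2 = -x + 4 by ring,
    show -(x - 2) - 2 = -x by ring, h1 x hx (by omega)] at hrec
  have hside := h2 x hx hx3
  rw [show -x + 2 = -(x - 2) by ring] at hside
  rw [show -(x + 2) + 4 = -(x - 2) by ring, neg_one_pow_half_toNat_add_two (by omega)]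
  linear_combination -hrec + 4 * hside - ih

lemma third_diagonals_of_three_le
    (h1 : ∀ x : ℤ, Odd x → 1 ≤ x →
      H x x = (-1) ^ ((x - 1) / 2).toNat ∧ H x (-x) = 0)
    (h2 : ∀ x : ℤ, Odd x → 3 ≤ x →
      H x (x - 2) = -((-1) ^ ((x - 1) / 2).toNat * (x - 1)) ∧
      H x (-x + 2) = (-1) ^ ((x - 1) / 2).toNat)
    (h3 : ∀ x y : ℤ, Odd x → Odd y → |y| ≤ x - 2 →
      4 * H x y = H (x + 2) y + H (x - 2) y + H x (y + 2) + H x (y - 2))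
    {x : ℤ} (hx : Odd x) (hx3 : 3 ≤ x) :
    H x (x - 4) = (-1) ^ ((x - 1) / 2).toNat * (x - 2) ^ 2 ∧
      H x (-x + 4) = -((-1) ^ ((x - 1) / 2).toNat * (2 * x - 4)) := by
  obtain ⟨k, rfl⟩ := hx
  induction k, (by omega : 1 ≤ k) using Int.leInduction with
  | base =>
    obtain ⟨hupper, hlower⟩ := h2 3 (by decide) le_rfl
    norm_num at hupper hlower ⊢
    exact ⟨hlower, hupper⟩
  | succ k hk ih =>
    have hodd : Odd (2 * k + 1) := ⟨k, rfl⟩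
    obtain ⟨ihu, ihl⟩ := ih (by omega)
    rw [show 2 * (k + 1) + 1 = 2 * k + 1 + 2 by ring]
    exact ⟨upper_third_diagonal_step H (fun x hx h => (h1 x hx h).1) (fun x hx h => (h2 x hx h).1)
        h3 hodd (by omega) ihu,
      lower_third_diagonal_step H (fun x hx h => (h1 x hx h).2) (fun x hx h => (h2 x hx h).2)
        h3 hodd (by omega) ihl⟩

end

/-- Let `H` be the function on the quadrant
`Q = {(x,y) : x, y odd, 1 ≤ x, |y| ≤ x}` determined by the boundary conditions
(i), (ii) and the harmonicity recursion (iii). Then for every odd `x ≥ 5`,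
`H(x, x−4) = (−1)^{(x−1)/2}·(x−2)²` and `H(x, −x+4) = −(−1)^{(x−1)/2}·(2x−4)`. -/
theorem quadrant_third_diagonals (H : ℤ → ℤ → ℤ)
    (h1 : ∀ x : ℤ, Odd x → 1 ≤ x →
      H x x = (-1) ^ ((x - 1) / 2).toNat ∧ H x (-x) = 0)
    (h2 : ∀ x : ℤ, Odd x → 3 ≤ x →
      H x (x - 2) = -((-1) ^ ((x - 1) / 2).toNat * (x - 1)) ∧
      H x (-x + 2) = (-1) ^ ((x - 1) / 2).toNat)
    (h3 : ∀ x y : ℤ, Odd x → Odd y → |y| ≤ x - 2 →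
      4 * H x y = H (x + 2) y + H (x - 2) y + H x (y + 2) + H x (y - 2)) :
    ∀ x : ℤ, Odd x → 5 ≤ x →
      H x (x - 4) = (-1) ^ ((x - 1) / 2).toNat * (x - 2) ^ 2 ∧
      H x (-x + 4) = -((-1) ^ ((x - 1) / 2).toNat * (2 * x - 4)) := by
  intro x hx hx5
  exact third_diagonals_of_three_le H h1 h2 h3 hx (by omega)
end

section
/- Let H : Q → ℤ be the function on the quadrant Q determined by the boundary conditions and the harmonicity recursion described in the context. If (x,y) ∈ Q with |y| < x and x is a prime number, then x divides H(x,y) − H(x,−y). -/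
/-!
Write `x = 2m + 1` and `y = x - 2i`. The numbers `2 (-1)^(m+i) (H(x,y) - H(x,-y))` obey the
same boundary values and the same recursion in `m` as the coefficients of
`W_m = V_{2m+1} + 1 + X^{2m+1}`, where `V_n = αⁿ + βⁿ` is the Lucas sequence of
`t² - (1 + X) t - X`, so the two arrays coincide. In characteristic `p` the Frobenius gives
`V_p = (α + β)^p = (1 + X)^p`, so for `x = p` prime every coefficient of `W_m` except the two
outer ones is `≡ (p choose i) ≡ 0 (mod p)`; since `p` is odd, the factor `2` cancels.
-/

open Polynomial

section Lucas

variable {R : Type*} [CommRing R] (P Q : R)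

def lucasV : ℕ → R
  | 0 => 2
  | 1 => P
  | n + 2 => P * lucasV (n + 1) - Q * lucasV n

@[simp] lemma lucasV_zero : lucasV P Q 0 = 2 := rfl
@[simp] lemma lucasV_one : lucasV P Q 1 = P := rfl
lemma lucasV_add_two (n : ℕ) :
    lucasV P Q (n + 2) = P * lucasV P Q (n + 1) - Q * lucasV P Q n := rfl

lemma lucasV_add_four (n : ℕ) :
    lucasV P Q (n + 4) = (P ^ 2 - 2 * Q) * lucasV P Q (n + 2) - Q ^ 2 * lucasV P Q n := by
  rw [lucasV_add_two P Q (n + 2), lucasV_add_two P Q (n + 1)]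
  linear_combination Q * lucasV_add_two P Q n

lemma map_lucasV {S : Type*} [CommRing S] (f : R →+* S) (n : ℕ) :
    f (lucasV P Q n) = lucasV (f P) (f Q) n := by
  induction n using Nat.twoStepInduction with
  | zero => exact map_ofNat f 2
  | one => rfl
  | more n ih₀ ih₁ => simp [lucasV_add_two, ih₀, ih₁]

lemma pow_add_pow_eq_algebraMap_lucasV {A : Type*} [Ring A] [Algebra R A] {a b : A}
    (ha : a ^ 2 = P • a - Q • 1) (hb : b ^ 2 = P • b - Q • 1)
    (hab : a + b = algebraMap R A P) (n : ℕ) :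
    a ^ n + b ^ n = algebraMap R A (lucasV P Q n) := by
  have hrec (c : A) (hc : c ^ 2 = P • c - Q • 1) (n : ℕ) :
      c ^ (n + 2) = P • c ^ (n + 1) - Q • c ^ n := by
    rw [pow_add, hc, mul_sub, mul_smul_comm, mul_smul_comm, ← pow_succ, mul_one]
  induction n using Nat.twoStepInduction with
  | zero => rw [pow_zero, pow_zero, one_add_one_eq_two, lucasV_zero, map_ofNat]
  | one => simpa using hab
  | more n ih₀ ih₁ =>
    rw [hrec a ha, hrec b hb, lucasV_add_two, map_sub, map_mul, map_mul, ← ih₀, ← ih₁,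
      ← Algebra.smul_def, ← Algebra.smul_def]
    module

lemma lucasV_prime_eq_pow (p : ℕ) [Fact p.Prime] [CharP R p] : lucasV P Q p = P ^ p := by
  -- `a` and `b = P - a` stand in for the two roots of `t² - P t + Q`.
  let a : Matrix (Fin 2) (Fin 2) R := !![P, -Q; 1, 0]
  let b : Matrix (Fin 2) (Fin 2) R := !![0, Q; -1, P]
  have hab : a + b = algebraMap R _ P := by
    ext i j; fin_cases i <;> fin_cases j <;> simp [a, b, Matrix.algebraMap_matrix_apply]
  have hcomm : Commute a b := by
    ext i j; fin_cases i <;> fin_cases j <;> simp [a, b, Matrix.mul_apply]; ring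
  have ha : a ^ 2 = P • a - Q • 1 := by
    ext i j; fin_cases i <;> fin_cases j <;> simp [a, sq, Matrix.mul_apply]; ring
  have hb : b ^ 2 = P • b - Q • 1 := by
    ext i j; fin_cases i <;> fin_cases j <;> simp [b, sq, Matrix.mul_apply] <;> ring
  have h := pow_add_pow_eq_algebraMap_lucasV P Q ha hb hab p
  rw [← add_pow_char_of_commute _ hcomm, hab, ← map_pow] at h
  simpa [Matrix.algebraMap_matrix_apply] using (congrFun (congrFun h 0) 0).symm

end Lucas

local notation "V" => lucasV (1 + X : ℤ[X]) (-X)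

lemma coeff_lucasV_add_two_succ (n k : ℕ) :
    (V (n + 2)).coeff (k + 1) =
      (V (n + 1)).coeff (k + 1) + (V (n + 1)).coeff k + (V n).coeff k := by
  rw [lucasV_add_two, neg_mul, sub_neg_eq_add, add_mul, one_mul, coeff_add, coeff_add,
    coeff_X_mul, coeff_X_mul]

lemma coeff_lucasV_of_lt {n k : ℕ} (h : n < k) : (V n).coeff k = 0 := by
  induction n using Nat.twoStepInduction generalizing k with
  | zero =>
    obtain ⟨k, rfl⟩ := Nat.exists_eq_add_one_of_ne_zero h.ne'
    exact coeff_ofNat_succ 2 k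
  | one => simp [coeff_one, coeff_X]; omega
  | more n ih₀ ih₁ =>
    obtain ⟨k, rfl⟩ := Nat.exists_eq_add_one_of_ne_zero (by omega : k ≠ 0)
    rw [coeff_lucasV_add_two_succ, ih₀ (by omega), ih₁ (by omega), ih₁ (by omega)]
    simp

lemma coeff_zero_lucasV_succ (n : ℕ) : (V (n + 1)).coeff 0 = 1 := by
  induction n with
  | zero => simp
  | succ n ih => simp [lucasV_add_two, ih]

lemma coeff_lucasV_self_succ (n : ℕ) : (V (n + 1)).coeff (n + 1) = 1 := by
  induction n with
  | zero => simp [coeff_one]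
  | succ n ih => rw [coeff_lucasV_add_two_succ, ih, coeff_lucasV_of_lt (by omega),
      coeff_lucasV_of_lt (by omega)]; simp

lemma coeff_one_lucasV_add_two (n : ℕ) :
    (V (n + 2)).coeff 1 = 2 * n + 4 := by
  induction n with
  | zero => rw [coeff_lucasV_add_two_succ]; simp [coeff_one]
  | succ n ih =>
    rw [coeff_lucasV_add_two_succ, ih, coeff_zero_lucasV_succ, coeff_zero_lucasV_succ]
    push_cast; ring

lemma coeff_lucasV_add_two_self_succ (n : ℕ) :
    (V (n + 2)).coeff (n + 1) = 2 * n + 4 := by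
  induction n with
  | zero => exact coeff_one_lucasV_add_two 0
  | succ n ih =>
    rw [coeff_lucasV_add_two_succ, coeff_lucasV_self_succ, ih, coeff_lucasV_self_succ]
    push_cast; ring

noncomputable def lucasW (m : ℕ) : ℤ[X] := V (2 * m + 1) + 1 + X ^ (2 * m + 1)

lemma lucasW_add_two (n : ℕ) :
    lucasW (n + 2) = (1 + 4 * X + X ^ 2) * lucasW (n + 1) - X ^ 2 * lucasW n
      - 4 * X - 4 * X ^ (2 * n + 4) := by
  have h := lucasV_add_four (1 + X : ℤ[X]) (-X) (2 * n + 1)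
  simp only [lucasW, show 2 * (n + 2) + 1 = 2 * n + 1 + 4 by ring,
    show 2 * (n + 1) + 1 = 2 * n + 1 + 2 by ring] at h ⊢
  rw [h]
  ring

lemma coeff_lucasW_add_two {n i : ℕ} (hi : i ≤ 2 * n + 1) :
    (lucasW (n + 2)).coeff (i + 2) = (lucasW (n + 1)).coeff (i + 2)
      + 4 * (lucasW (n + 1)).coeff (i + 1) + (lucasW (n + 1)).coeff i - (lucasW n).coeff i := by
  rw [lucasW_add_two]
  simp [add_mul, mul_assoc, coeff_X, coeff_X_pow, coeff_X_mul, coeff_X_pow_mul']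
  omega

lemma coeff_zero_lucasW (m : ℕ) : (lucasW m).coeff 0 = 2 := by
  simp [lucasW, coeff_zero_lucasV_succ]

lemma coeff_lucasW_self (m : ℕ) : (lucasW m).coeff (2 * m + 1) = 2 := by
  simp [lucasW, coeff_lucasV_self_succ, coeff_one]

lemma coeff_one_lucasW {m : ℕ} (hm : 1 ≤ m) : (lucasW m).coeff 1 = 2 * (2 * m + 1) := by
  obtain ⟨k, rfl⟩ := Nat.exists_eq_add_of_le' hm
  rw [lucasW, show 2 * (k + 1) + 1 = 2 * k + 1 + 2 by ring]
  simp [coeff_one_lucasV_add_two, coeff_one, coeff_X_pow]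
  ring

lemma coeff_lucasW_pred_self {m : ℕ} (hm : 1 ≤ m) :
    (lucasW m).coeff (2 * m) = 2 * (2 * m + 1) := by
  obtain ⟨k, rfl⟩ := Nat.exists_eq_add_of_le' hm
  rw [lucasW, show 2 * (k + 1) + 1 = 2 * k + 1 + 2 by ring,
    show 2 * (k + 1) = 2 * k + 1 + 1 by ring]
  simp [coeff_lucasV_add_two_self_succ, coeff_one, coeff_X_pow]
  ring

lemma prime_dvd_coeff_lucasW {m i : ℕ} (hp : (2 * m + 1).Prime) (hi₀ : 0 < i)
    (hi : i < 2 * m + 1) :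
    ((2 * m + 1 : ℕ) : ℤ) ∣ (lucasW m).coeff i := by
  have := Fact.mk hp
  have hV : (V (2 * m + 1)).map (Int.castRingHom (ZMod (2 * m + 1))) =
      (1 + X) ^ (2 * m + 1) := by
    rw [← coe_mapRingHom, map_lucasV, lucasV_prime_eq_pow]; simp
  have hcoeff := congrArg (coeff · i) hV
  simp only [coeff_map, coeff_one_add_X_pow, eq_intCast] at hcoeff
  rw [(ZMod.natCast_eq_zero_iff _ _).mpr (hp.dvd_choose_self hi₀.ne' hi),
    ZMod.intCast_zmod_eq_zero_iff_dvd] at hcoeff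
  simpa [lucasW, coeff_one, coeff_X_pow, hi₀.ne', hi.ne] using hcoeff

/-- Row `m` stands for the column `x = 2m+1` of the quadrant and entry `i` for `y = x - 2i`; the
fields are the boundary values and the harmonicity recursion of `2 (-1)^(m+i) (H(x,y) - H(x,-y))`
in these coordinates. -/
structure IsQuadrantArray (f : ℕ → ℕ → ℤ) : Prop where
  zero : ∀ m, f m 0 = 2
  one : ∀ m, 1 ≤ m → f m 1 = 2 * (2 * m + 1)
  pred_top : ∀ m, 1 ≤ m → f m (2 * m) = 2 * (2 * m + 1)
  top : ∀ m, f m (2 * m + 1) = 2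
  add_two : ∀ n j, j ≤ 2 * n + 1 →
    f (n + 2) (j + 2) = f (n + 1) (j + 2) + 4 * f (n + 1) (j + 1) + f (n + 1) j - f n j

lemma IsQuadrantArray.eq {f g : ℕ → ℕ → ℤ} (hf : IsQuadrantArray f) (hg : IsQuadrantArray g)
    (m : ℕ) : ∀ i ≤ 2 * m + 1, f m i = g m i := by
  induction m using Nat.strong_induction_on with
  | _ m ih =>
  intro i hi
  rcases Nat.lt_or_ge i 2 with hi2 | hi2
  · interval_cases i
    · rw [hf.zero, hg.zero]
    · rcases Nat.eq_zero_or_pos m with rfl | hm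
      · exact (hf.top 0).trans (hg.top 0).symm
      · rw [hf.one m hm, hg.one m hm]
  rcases Nat.lt_or_ge i (2 * m) with him | him
  · obtain ⟨n, rfl⟩ : ∃ n, m = n + 2 := ⟨m - 2, by omega⟩
    obtain ⟨j, rfl⟩ : ∃ j, i = j + 2 := ⟨i - 2, by omega⟩
    rw [hf.add_two n j (by omega), hg.add_two n j (by omega),
      ih (n + 1) (by omega) (j + 2) (by omega), ih (n + 1) (by omega) (j + 1) (by omega),
      ih (n + 1) (by omega) j (by omega), ih n (by omega) j (by omega)]
  rcases (by omega : i = 2 * m ∨ i = 2 * m + 1) with rfl | rfl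
  · rw [hf.pred_top m (by omega), hg.pred_top m (by omega)]
  · rw [hf.top, hg.top]

lemma isQuadrantArray_coeff_lucasW : IsQuadrantArray fun m i ↦ (lucasW m).coeff i where
  zero := coeff_zero_lucasW
  one _ := coeff_one_lucasW
  pred_top _ := coeff_lucasW_pred_self
  top := coeff_lucasW_self
  add_two _ _ := coeff_lucasW_add_two

section Skew

variable (H : ℤ → ℤ → ℤ)

def skew (x y : ℤ) : ℤ := H x y - H x (-y)

lemma skew_neg (x y : ℤ) : skew H x (-y) = -skew H x y := by
  simp [skew]

lemma skew_harmonic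
    (h3 : ∀ x y : ℤ, Odd x → Odd y → |y| ≤ x - 2 →
      4 * H x y = H (x + 2) y + H (x - 2) y + H x (y + 2) + H x (y - 2))
    {x y : ℤ} (hx : Odd x) (hy : Odd y) (hxy : |y| ≤ x - 2) :
    4 * skew H x y =
      skew H (x + 2) y + skew H (x - 2) y + skew H x (y + 2) + skew H x (y - 2) := by
  have h := h3 x y hx hy hxy
  have h' := h3 x (-y) hx hy.neg (by rwa [abs_neg])
  simp only [skew]
  rw [neg_add', neg_sub', sub_neg_eq_add]
  linear_combination h - h'

lemma skew_self
    (h1 : ∀ x : ℤ, Odd x → 1 ≤ x →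
      H x x = (-1) ^ ((x - 1) / 2).toNat ∧ H x (-x) = 0)
    (m : ℕ) : skew H (2 * m + 1) (2 * m + 1) = (-1) ^ m := by
  obtain ⟨hp, hn⟩ := h1 (2 * m + 1) (odd_two_mul_add_one _) (by omega)
  rw [skew, hp, hn, show ((2 * (m : ℤ) + 1 - 1) / 2).toNat = m by omega, sub_zero]

lemma skew_sub_two
    (h2 : ∀ x : ℤ, Odd x → 3 ≤ x →
      H x (x - 2) = -((-1) ^ ((x - 1) / 2).toNat * (x - 1)) ∧
      H x (-x + 2) = (-1) ^ ((x - 1) / 2).toNat)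
    {m : ℕ} (hm : 1 ≤ m) : skew H (2 * m + 1) (2 * m - 1) = -(-1) ^ m * (2 * m + 1) := by
  obtain ⟨hp, hn⟩ := h2 (2 * m + 1) (odd_two_mul_add_one _) (by omega)
  rw [show ((2 * (m : ℤ) + 1 - 1) / 2).toNat = m by omega] at hp hn
  rw [skew, show -(2 * m - 1 : ℤ) = -(2 * m + 1) + 2 by ring,
    show (2 * m - 1 : ℤ) = 2 * m + 1 - 2 by ring, hp, hn]
  ring

def skewArray (m i : ℕ) : ℤ := (-1) ^ (m + i) * 2 * skew H (2 * m + 1) (2 * m + 1 - 2 * i)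

lemma isQuadrantArray_skewArray
    (h1 : ∀ x : ℤ, Odd x → 1 ≤ x →
      H x x = (-1) ^ ((x - 1) / 2).toNat ∧ H x (-x) = 0)
    (h2 : ∀ x : ℤ, Odd x → 3 ≤ x →
      H x (x - 2) = -((-1) ^ ((x - 1) / 2).toNat * (x - 1)) ∧
      H x (-x + 2) = (-1) ^ ((x - 1) / 2).toNat)
    (h3 : ∀ x y : ℤ, Odd x → Odd y → |y| ≤ x - 2 →
      4 * H x y = H (x + 2) y + H (x - 2) y + H x (y + 2) + H x (y - 2)) :
    IsQuadrantArray (skewArray H) where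
  zero m := by
    rw [skewArray, add_zero, Nat.cast_zero, mul_zero, sub_zero, skew_self H h1]
    rcases neg_one_pow_eq_or ℤ m with h | h <;> rw [h] <;> ring
  one m hm := by
    rw [skewArray, Nat.cast_one, show (2 * m + 1 - 2 * 1 : ℤ) = 2 * m - 1 by ring,
      skew_sub_two H h2 hm, pow_succ]
    rcases neg_one_pow_eq_or ℤ m with h | h <;> rw [h] <;> ring
  pred_top m hm := by
    rw [skewArray, show (2 * m + 1 - 2 * (2 * m : ℕ) : ℤ) = -(2 * m - 1) by push_cast; ring,
      skew_neg, skew_sub_two H h2 hm, show m + 2 * m = m + m + m by ring, pow_add, pow_add]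
    rcases neg_one_pow_eq_or ℤ m with h | h <;> rw [h] <;> ring
  top m := by
    rw [skewArray, show (2 * m + 1 - 2 * (2 * m + 1 : ℕ) : ℤ) = -(2 * m + 1) by push_cast; ring,
      skew_neg, skew_self H h1, show m + (2 * m + 1) = m + m + m + 1 by ring, pow_succ, pow_add,
      pow_add]
    rcases neg_one_pow_eq_or ℤ m with h | h <;> rw [h] <;> ring
  add_two n j hj := by
    have e := skew_harmonic H h3 (x := 2 * n + 3) (y := 2 * n + 1 - 2 * j) ⟨n + 1, by ring⟩
      ⟨n - j, by ring⟩ (by rw [abs_le]; constructor <;> omega)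
    simp only [skewArray]
    push_cast
    ring_nf at e ⊢
    linear_combination (-2 * (-1) ^ n * (-1) ^ j : ℤ) * e

end Skew

/-- Let `H` be the function on the quadrant
`Q = {(x,y) : x, y odd, 1 ≤ x, |y| ≤ x}` determined by the boundary conditions
(i), (ii) and the harmonicity recursion (iii). If `(x,y) ∈ Q` with `|y| < x` and
`x` is prime, then `x` divides `H(x,y) − H(x,−y)`. -/
theorem quadrant_prime_divides (H : ℤ → ℤ → ℤ)
    (h1 : ∀ x : ℤ, Odd x → 1 ≤ x →
      H x x = (-1) ^ ((x - 1) / 2).toNat ∧ H x (-x) = 0)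
    (h2 : ∀ x : ℤ, Odd x → 3 ≤ x →
      H x (x - 2) = -((-1) ^ ((x - 1) / 2).toNat * (x - 1)) ∧
      H x (-x + 2) = (-1) ^ ((x - 1) / 2).toNat)
    (h3 : ∀ x y : ℤ, Odd x → Odd y → |y| ≤ x - 2 →
      4 * H x y = H (x + 2) y + H (x - 2) y + H x (y + 2) + H x (y - 2)) :
    ∀ x y : ℤ, Odd x → Odd y → 1 ≤ x → |y| < x → Prime x →
      x ∣ (H x y - H x (-y)) := by
  intro x y hx hy hx1 hyx hxp
  obtain ⟨m, rfl⟩ : ∃ m : ℕ, x = 2 * m + 1 := by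
    obtain ⟨a, rfl⟩ := hx
    exact ⟨a.toNat, by omega⟩
  obtain ⟨i, rfl, hi₀, hi⟩ :
      ∃ i : ℕ, y = 2 * m + 1 - 2 * i ∧ 0 < i ∧ i < 2 * m + 1 := by
    obtain ⟨b, rfl⟩ := hy
    rw [abs_lt] at hyx
    exact ⟨(m - b).toNat, by omega, by omega, by omega⟩
  have hp : (2 * m + 1).Prime := Nat.prime_iff_prime_int.mpr (by exact_mod_cast hxp)
  have hdvd := prime_dvd_coeff_lucasW hp hi₀ hi
  rw [← (isQuadrantArray_skewArray H h1 h2 h3).eq isQuadrantArray_coeff_lucasW m i hi.le,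
    skewArray, mul_assoc, ((isUnit_neg_one).pow _).dvd_mul_left] at hdvd
  push_cast at hdvd
  refine (hxp.dvd_or_dvd hdvd).resolve_left fun hdvd₂ ↦ ?_
  have := Int.le_of_dvd two_pos hdvd₂
  have := hp.two_le
  omega
end
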